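/- Let F be a field with char F ≠ 2, let n > 2, and let a : Fin n → Fˣ. For c ∈ F define m(c) = #{i : (a i : F) = c} + #{i : ((a i)⁻¹ : F) = c} + (1 if c = 1, else 0). Then the following are equivalent: (i) for all i ≠ j one has a i ≠ a j and (a i)·(a j) ≠ 1, and a i ≠ 1 for all i; (ii) m(−1) ≤ 2 and m(c) ≤ 1 for every c ∈ F with c ≠ −1. -/

import Mathlib

/-!
Write `A c` for the number of `i` with `a i = c`. Since `(a i)⁻¹ = c ↔ a i = c⁻¹`,
`m c = A c + A c⁻¹ + [c = 1]`; as `-1 ≠ 1` this gives `m (-1) = 2 A (-1)` and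
`m 1 = 2 A 1 + 1`. Both conditions then say: `a` is injective, `1` is not a value of `a`,
and for `c² ≠ 1` not both `c` and `c⁻¹` are values. For the last clause, `a i * a j = 1` with
`i ≠ j` makes `a i` and `(a i)⁻¹` values, and `(a i)² = 1` would force `a j = a i`.
-/

open Finset Function

section FiberCard

open scoped Classical

variable {F ι : Type*} [Field F] [Fintype ι] (a : ι → Fˣ)

noncomputable def fiberCard (c : F) : ℕ := #{i | (a i : F) = c}

noncomputable def eigenvalueMult (c : F) : ℕ :=
  fiberCard a c + fiberCard a c⁻¹ + if c = 1 then 1 else 0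

variable {a}

theorem fiberCard_eq_zero_iff {c : F} : fiberCard a c = 0 ↔ ∀ i, (a i : F) ≠ c := by
  simp [fiberCard, filter_eq_empty_iff]

theorem fiberCard_one_eq_zero_iff : fiberCard a 1 = 0 ↔ ∀ i, a i ≠ 1 := by
  simp only [fiberCard_eq_zero_iff, ne_eq, Units.val_eq_one]

theorem fiberCard_le_one_iff_injective : (∀ c : F, fiberCard a c ≤ 1) ↔ Injective a := by
  refine ⟨fun h i j hij => ?_, fun h c => card_le_one.2 fun i hi j hj => ?_⟩
  · by_contra hne
    exact (h (a i)).not_gt (one_lt_card.2 ⟨i, by simp, j, by simp [hij], hne⟩)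
  · simp only [mem_filter] at hi hj
    exact h (Units.ext (hi.2.trans hj.2.symm))

theorem card_filter_val_inv_eq (c : F) :
    #{i | (((a i)⁻¹ : Fˣ) : F) = c} = fiberCard a c⁻¹ := by
  simp only [fiberCard, Units.val_inv_eq_inv_val, inv_eq_iff_eq_inv]

theorem pairwise_mul_ne_one_iff (ha : Injective a) :
    (∀ i j, i ≠ j → a i * a j ≠ 1) ↔
      ∀ c : F, c * c ≠ 1 → fiberCard a c = 0 ∨ fiberCard a c⁻¹ = 0 := by
  constructor
  · intro h c hc
    by_contra! hpos
    obtain ⟨⟨i, rfl⟩, ⟨j, hj⟩⟩ : (∃ i, (a i : F) = c) ∧ ∃ j, (a j : F) = c⁻¹ := by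
      simpa [fiberCard_eq_zero_iff] using hpos
    rcases eq_or_ne i j with rfl | hij
    · exact hc (by simpa [← hj] using (a i).mul_inv)
    · exact h i j hij (Units.ext (by simp [hj]))
  · intro h i j hij hmul
    have hji : a j = (a i)⁻¹ := eq_inv_of_mul_eq_one_right hmul
    have hsq : (a i : F) * a i ≠ 1 := fun hsq =>
      hij (ha (hji.trans (inv_eq_of_mul_eq_one_right (Units.ext (by simpa using hsq)))).symm)
    rcases h _ hsq with h0 | h0
    · exact fiberCard_eq_zero_iff.1 h0 i rfl
    · exact fiberCard_eq_zero_iff.1 h0 j (by simp [hji])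

theorem regular_iff_fiberCard :
    ((∀ i j, i ≠ j → a i ≠ a j ∧ a i * a j ≠ 1) ∧ ∀ i, a i ≠ 1) ↔
      (∀ c : F, fiberCard a c ≤ 1) ∧ fiberCard a 1 = 0 ∧
        ∀ c : F, c * c ≠ 1 → fiberCard a c = 0 ∨ fiberCard a c⁻¹ = 0 := by
  rw [fiberCard_le_one_iff_injective, fiberCard_one_eq_zero_iff]
  constructor
  · rintro ⟨h, h1⟩
    have ha : Injective a := fun i j hij => by_contra fun hne => (h i j hne).1 hij
    exact ⟨ha, h1, (pairwise_mul_ne_one_iff ha).1 fun i j hij => (h i j hij).2⟩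
  · rintro ⟨ha, h1, hc⟩
    exact ⟨fun i j hij => ⟨ha.ne hij, (pairwise_mul_ne_one_iff ha).2 hc i j hij⟩, h1⟩

theorem eigenvalueMult_neg_one (hF : (-1 : F) ≠ 1) :
    eigenvalueMult a (-1) = 2 * fiberCard a (-1) := by
  simp only [eigenvalueMult, inv_neg, inv_one, if_neg hF]
  ring

theorem eigenvalueMult_one : eigenvalueMult a 1 = 2 * fiberCard a 1 + 1 := by
  simp only [eigenvalueMult, inv_one, if_pos]
  ring

theorem eigenvalueMult_of_ne_one {c : F} (hc : c ≠ 1) :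
    eigenvalueMult a c = fiberCard a c + fiberCard a c⁻¹ := by
  simp only [eigenvalueMult, if_neg hc, add_zero]

theorem mult_bound_iff_fiberCard (hF : (-1 : F) ≠ 1) :
    (eigenvalueMult a (-1) ≤ 2 ∧ ∀ c : F, c ≠ -1 → eigenvalueMult a c ≤ 1) ↔
      (∀ c : F, fiberCard a c ≤ 1) ∧ fiberCard a 1 = 0 ∧
        ∀ c : F, c * c ≠ 1 → fiberCard a c = 0 ∨ fiberCard a c⁻¹ = 0 := by
  rw [eigenvalueMult_neg_one hF]
  constructor
  · rintro ⟨hneg, hrest⟩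
    have h1 := eigenvalueMult_one (a := a) ▸ hrest 1 hF.symm
    refine ⟨fun c => ?_, by omega, fun c hc => ?_⟩
    · rcases eq_or_ne c (-1) with rfl | hc
      · omega
      · have := hrest c hc
        unfold eigenvalueMult at this
        omega
    · have hc1 : c ≠ 1 := by rintro rfl; simp at hc
      have hc' : c ≠ -1 := by rintro rfl; simp at hc
      have := eigenvalueMult_of_ne_one (a := a) hc1 ▸ hrest c hc'
      omega
  · rintro ⟨hle, h1, hc⟩
    refine ⟨by linarith [hle (-1)], fun c hc' => ?_⟩
    rcases eq_or_ne c 1 with rfl | hc1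
    · rw [eigenvalueMult_one, h1]
    · have hsq : c * c ≠ 1 := by rw [Ne, mul_self_eq_one_iff]; tauto
      rw [eigenvalueMult_of_ne_one hc1]
      have := hle c
      have := hle c⁻¹
      rcases hc c hsq with h | h <;> omega

end FiberCard

open scoped Classical in
theorem regular_iff_mult_Bn
    {F : Type*} [Field F] (hF : ringChar F ≠ 2) {n : ℕ}
    (a : Fin n → Fˣ)
    (m : F → ℕ)
    (hm : ∀ c : F, m c =
      (Finset.univ.filter (fun i => (a i : F) = c)).card +
      (Finset.univ.filter (fun i => (((a i)⁻¹ : Fˣ) : F) = c)).card +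
      (if c = 1 then 1 else 0)) :
    ((∀ i j, i ≠ j → a i ≠ a j ∧ a i * a j ≠ 1) ∧ (∀ i, a i ≠ 1)) ↔
      (m (-1) ≤ 2 ∧ ∀ c : F, c ≠ -1 → m c ≤ 1) := by
  obtain rfl : m = eigenvalueMult a := funext fun c => by
    rw [hm, card_filter_val_inv_eq]
    rfl
  rw [regular_iff_fiberCard, mult_bound_iff_fiberCard (Ring.neg_one_ne_one_of_char_ne_two hF)]
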